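/- The Ex₀-composition of two w-permutations is a w-permutation: if σ and τ are involutive partial permutations with disjoint (finite) domains and f is a partial injection with dom(f) ⊆ dom(σ) and codom(f) ⊆ dom(τ), then σ ⋈_f τ := Ex(σ + τ, f + f⋆) is an involutive partial permutation. -/
import Mathlib


namespace IN

/-- Partial injections of integers represented as functional, injective relations. -/
abbrev Rel' := ℕ → ℕ → Prop

def IsPInj (f : Rel') : Prop :=
  (∀ x y y', f x y → f x y' → y = y') ∧ (∀ x x' y, f x y → f x' y → x = x')

def dom (f : Rel') : Set ℕ := {x | ∃ y, f x y}
def cod (f : Rel') : Set ℕ := {y | ∃ x, f x y}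
/-- inverse partial injection f⋆ -/
def inv (f : Rel') : Rel' := fun x y => f y x
/-- `comp g f` applies `f` first, then `g` (i.e. g ∘ f). -/
def comp (g f : Rel') : Rel' := fun x z => ∃ y, f x y ∧ g y z
/-- sum of partial injections (union of graphs) -/
def rsum (f g : Rel') : Rel' := fun x y => f x y ∨ g x y
/-- the empty partial injection -/
def zero : Rel' := fun _ _ => False
/-- restriction of f to domain E and codomain F -/
def restr (f : Rel') (E F : Set ℕ) : Rel' := fun x y => f x y ∧ x ∈ E ∧ y ∈ F

/-- `iter f g n` is the partial injection f(gf)^n. -/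
def iter (f g : Rel') : ℕ → Rel'
  | 0 => f
  | n + 1 => comp (iter f g n) (comp g f)

/-- Ex_n(f,g) = Σ_{i ≤ n} (f(gf)^i)|_{A→C} -/
def Exn (f g : Rel') (A C : Set ℕ) (n : ℕ) : Rel' :=
  fun x y => ∃ i ≤ n, restr (iter f g i) A C x y

/-- Ex(f,g), the execution formula: union of the Ex_n(f,g). -/
def Ex (f g : Rel') (A C : Set ℕ) : Rel' :=
  fun x y => ∃ i, restr (iter f g i) A C x y

/-- w-permutation: involutive partial permutation of finite domain -/
def IsWPerm (σ : Rel') : Prop :=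
  IsPInj σ ∧ (∀ x y, σ x y → σ y x) ∧ (dom σ).Finite

/-- Ex₀-composition σ ⋈_f τ = Ex(σ+τ, f+f⋆) -/
def cexec (σ τ f : Rel') : Rel' :=
  Ex (rsum σ τ) (rsum f (inv f))
    ((dom σ ∪ dom τ) \ (dom f ∪ cod f)) ((dom σ ∪ dom τ) \ (dom f ∪ cod f))


lemma iter_succ' (f g : Rel') (n : ℕ) (x z : ℕ) :
    iter f g (n+1) x z ↔ ∃ a b, iter f g n x a ∧ g a b ∧ f b z := by
  induction n generalizing x z with
  | zero =>
    constructor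
    · rintro ⟨m, ⟨a, hfa, hga⟩, hfz⟩
      exact ⟨a, m, hfa, hga, hfz⟩
    · rintro ⟨a, b, hfa, hga, hfz⟩
      exact ⟨b, ⟨a, hfa, hga⟩, hfz⟩
  | succ n ih =>
    constructor
    · rintro ⟨m, hcm, hit⟩
      obtain ⟨c, d, hnc, hgd, hfz⟩ := (ih m z).mp hit
      exact ⟨c, d, ⟨m, hcm, hnc⟩, hgd, hfz⟩
    · rintro ⟨a, b, ⟨m, hcm, hnm⟩, hgb, hfz⟩
      exact ⟨m, hcm, (ih m z).mpr ⟨a, b, hnm, hgb, hfz⟩⟩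

lemma iter_symm {F G : Rel'} (hF : ∀ x y, F x y → F y x)
    (hG : ∀ x y, G x y → G y x) :
    ∀ n x y, iter F G n x y → iter F G n y x := by
  intro n
  induction n with
  | zero => exact hF
  | succ n ih =>
    intro x y h
    obtain ⟨m, ⟨a, hfa, hgm⟩, hit⟩ := h
    exact (iter_succ' F G n y x).mpr ⟨m, a, ih m y hit, hG a m hgm, hF x a hfa⟩

lemma iter_det {F G : Rel'} (hF : ∀ x y y', F x y → F x y' → y = y')
    (hG : ∀ x y y', G x y → G x y' → y = y') :
    ∀ i x y, iter F G i x y → y ∉ dom G →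
      ∀ j y', iter F G j x y' → y' ∉ dom G → y = y' := by
  intro i
  induction i with
  | zero =>
    intro x y hy hdy j y' hy' hdy'
    cases j with
    | zero => exact hF x y y' hy hy'
    | succ k =>
      obtain ⟨m, ⟨a, hfa, hga⟩, _⟩ := hy'
      have h : y = a := hF x y a hy hfa
      exact absurd ⟨m, h ▸ hga⟩ hdy
  | succ n ih =>
    intro x y hy hdy j y' hy' hdy'
    obtain ⟨m, ⟨a, hfa, hga⟩, hit⟩ := hy
    cases j with
    | zero =>
      have h : y' = a := hF x y' a hy' hfa
      exact absurd ⟨m, h ▸ hga⟩ hdy'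
    | succ k =>
      obtain ⟨m', ⟨a', hfa', hga'⟩, hit'⟩ := hy'
      have ha : a' = a := hF x a' a hfa' hfa
      subst ha
      have hm : m' = m := hG a' m' m hga' hga
      subst hm
      exact ih m' y hit hdy k y' hit' hdy'

/-- the Ex₀-composition of two w-permutations is a w-permutation. -/
theorem cexec_wperm (σ τ f : Rel')
    (hσ : IsWPerm σ) (hτ : IsWPerm τ) (hd : Disjoint (dom σ) (dom τ))
    (hf : IsPInj f) (hdf : dom f ⊆ dom σ) (hcf : cod f ⊆ dom τ) :
    IsWPerm (cexec σ τ f) := by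
  set A := (dom σ ∪ dom τ) \ (dom f ∪ cod f) with hA
  set F : Rel' := rsum σ τ with hF
  set G : Rel' := rsum f (inv f) with hG
  -- F is symmetric
  have hFsym : ∀ x y, F x y → F y x := by
    rintro x y (h | h)
    · exact Or.inl (hσ.2.1 x y h)
    · exact Or.inr (hτ.2.1 x y h)
  -- G is symmetric
  have hGsym : ∀ x y, G x y → G y x := by
    rintro x y (h | h)
    · exact Or.inr h
    · exact Or.inl h
  -- F is functional
  have hFfun : ∀ x y y', F x y → F x y' → y = y' := by
    rintro x y y' (h | h) (h' | h')
    · exact hσ.1.1 x y y' h h'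
    · exact absurd ⟨y', h'⟩ (Set.disjoint_left.mp hd ⟨y, h⟩)
    · exact absurd ⟨y, h⟩ (Set.disjoint_left.mp hd ⟨y', h'⟩)
    · exact hτ.1.1 x y y' h h'
  -- G is functional
  have hGfun : ∀ x y y', G x y → G x y' → y = y' := by
    rintro x y y' (h | h) (h' | h')
    · exact hf.1 x y y' h h'
    · exact absurd (hcf ⟨y', h'⟩) (Set.disjoint_left.mp hd (hdf ⟨y, h⟩))
    · exact absurd (hcf ⟨y, h⟩) (Set.disjoint_left.mp hd (hdf ⟨y', h'⟩))
    · exact hf.2 y y' x h h'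
  -- membership in A implies not in dom G
  have hAG : ∀ y, y ∈ A → y ∉ dom G := by
    rintro y ⟨_, hy⟩ ⟨z, (h | h)⟩
    · exact hy (Or.inl ⟨z, h⟩)
    · exact hy (Or.inr ⟨z, h⟩)
  -- cexec is symmetric
  have hsym : ∀ x y, cexec σ τ f x y → cexec σ τ f y x := by
    rintro x y ⟨i, hit, hxA, hyA⟩
    exact ⟨i, iter_symm hFsym hGsym i x y hit, hyA, hxA⟩
  -- cexec is functional
  have hfun : ∀ x y y', cexec σ τ f x y → cexec σ τ f x y' → y = y' := by
    rintro x y y' ⟨i, hit, hxA, hyA⟩ ⟨j, hit', _, hyA'⟩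
    exact iter_det hFfun hGfun i x y hit (hAG y hyA) j y' hit' (hAG y' hyA')
  refine ⟨⟨hfun, ?_⟩, hsym, ?_⟩
  · intro x x' y hx hx'
    exact hfun y x x' (hsym x y hx) (hsym x' y hx')
  · refine (hσ.2.2.union hτ.2.2).subset ?_
    rintro x ⟨y, i, -, hxA, -⟩
    exact hxA.1


end IN
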